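/- Let ξ be a standard normal random variable, μ, ν ∈ ℝ, σ, τ > 0, and 0 < a < b. With x(c) denoting the unique real solution of c = exp(μ + σ·x) + exp(ν + τ·x) for c > 0, it holds that E[(exp(μ + σ·ξ) + exp(ν + τ·ξ))·1{a ≤ exp(μ + σ·ξ) + exp(ν + τ·ξ) < b}] = exp(μ + σ²/2)·(Φ(x(b) − σ) − Φ(x(a) − σ)) + exp(ν + τ²/2)·(Φ(x(b) − τ) − Φ(x(a) − τ)). -/

import Mathlib

/-! Since `y ↦ exp (μ + σ y) + exp (ν + τ y)` is strictly increasing, the event is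
`ξ ∈ [x(a), x(b))`. On it, completing the square, `φ(x) exp (m + s x) = exp (m + s²/2) φ(x - s)`,
turns the mean of each summand into a probability of the shifted normal. -/

open Real MeasureTheory ProbabilityTheory

/-- The standard normal density `φ(u) = (2π)^{-1/2} exp(-u²/2)`. -/
noncomputable def stdNormalPDF (u : ℝ) : ℝ := (Real.sqrt (2 * Real.pi))⁻¹ * Real.exp (-u ^ 2 / 2)

/-- The standard normal cumulative distribution function `Φ`. -/
noncomputable def stdNormalCDF (x : ℝ) : ℝ := ∫ u in Set.Iic x, stdNormalPDF u

open Set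

lemma stdNormalPDF_eq_gaussianPDFReal : stdNormalPDF = gaussianPDFReal 0 1 := by
  ext x
  simp [stdNormalPDF, gaussianPDFReal]

lemma integrable_stdNormalPDF : Integrable stdNormalPDF :=
  stdNormalPDF_eq_gaussianPDFReal ▸ integrable_gaussianPDFReal 0 1

lemma stdNormalCDF_sub_stdNormalCDF (c d : ℝ) :
    stdNormalCDF d - stdNormalCDF c = ∫ u in c..d, stdNormalPDF u :=
  intervalIntegral.integral_Iic_sub_Iic integrable_stdNormalPDF.integrableOn
    integrable_stdNormalPDF.integrableOn

lemma setIntegral_Ico_stdNormalPDF_sub {c d : ℝ} (hcd : c ≤ d) (s : ℝ) :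
    ∫ u in Ico c d, stdNormalPDF (u - s) = stdNormalCDF (d - s) - stdNormalCDF (c - s) := by
  rw [integral_Ico_eq_integral_Ioc, ← intervalIntegral.integral_of_le hcd,
    intervalIntegral.integral_comp_sub_right, stdNormalCDF_sub_stdNormalCDF]

lemma gaussianPDFReal_mul_exp (m s x : ℝ) :
    gaussianPDFReal 0 1 x * exp (m + s * x) = exp (m + s ^ 2 / 2) * stdNormalPDF (x - s) := by
  rw [← stdNormalPDF_eq_gaussianPDFReal, stdNormalPDF, stdNormalPDF, mul_assoc, ← exp_add,
    mul_left_comm, ← exp_add]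
  ring_nf

lemma setIntegral_gaussianReal_eq_setIntegral_smul {E : Type*} [NormedAddCommGroup E]
    [NormedSpace ℝ E] {m : ℝ} {v : NNReal} (hv : v ≠ 0) (f : ℝ → E) {S : Set ℝ}
    (hS : MeasurableSet S) :
    ∫ x in S, f x ∂gaussianReal m v = ∫ x in S, gaussianPDFReal m v x • f x := by
  rw [gaussianReal_of_var_ne_zero _ hv, gaussianPDF_def,
    setIntegral_withDensity_eq_setIntegral_toReal_smul
      (measurable_gaussianPDFReal _ _).ennreal_ofReal
      (ae_of_all _ fun _ ↦ ENNReal.ofReal_lt_top) f hS]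
  simp_rw [ENNReal.toReal_ofReal (gaussianPDFReal_nonneg _ _ _)]

lemma setIntegral_Ico_exp_gaussianReal {c d : ℝ} (hcd : c ≤ d) (m s : ℝ) :
    ∫ x in Ico c d, exp (m + s * x) ∂gaussianReal 0 1
      = exp (m + s ^ 2 / 2) * (stdNormalCDF (d - s) - stdNormalCDF (c - s)) := by
  simp_rw [setIntegral_gaussianReal_eq_setIntegral_smul one_ne_zero _ measurableSet_Ico,
    smul_eq_mul, gaussianPDFReal_mul_exp, integral_const_mul, setIntegral_Ico_stdNormalPDF_sub hcd]

lemma integrableOn_Ico_exp_affine {ρ : Measure ℝ} [IsLocallyFiniteMeasure ρ] (c d m s : ℝ) :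
    IntegrableOn (fun x ↦ exp (m + s * x)) (Ico c d) ρ :=
  (by fun_prop : Continuous fun x ↦ exp (m + s * x)).integrableOn_Icc.mono_set Ico_subset_Icc_self

lemma strictMono_exp_affine_add_exp_affine {μ ν σ τ : ℝ} (hσ : 0 < σ) (hτ : 0 < τ) :
    StrictMono fun y ↦ exp (μ + σ * y) + exp (ν + τ * y) :=
  (exp_strictMono.comp fun _ _ h ↦ by gcongr).add (exp_strictMono.comp fun _ _ h ↦ by gcongr)

theorem truncated_mean_sum_lognormal_general (μ ν σ τ a b xa xb : ℝ) (hσ : 0 < σ) (hτ : 0 < τ)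
    (hab : a < b)
    (hxa : a = Real.exp (μ + σ * xa) + Real.exp (ν + τ * xa))
    (hxb : b = Real.exp (μ + σ * xb) + Real.exp (ν + τ * xb)) :
    ∫ x in {y : ℝ | a ≤ Real.exp (μ + σ * y) + Real.exp (ν + τ * y) ∧
          Real.exp (μ + σ * y) + Real.exp (ν + τ * y) < b},
        (Real.exp (μ + σ * x) + Real.exp (ν + τ * x)) ∂(gaussianReal 0 1)
      = Real.exp (μ + σ ^ 2 / 2) * (stdNormalCDF (xb - σ) - stdNormalCDF (xa - σ))
        + Real.exp (ν + τ ^ 2 / 2) * (stdNormalCDF (xb - τ) - stdNormalCDF (xa - τ)) := by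
  set f : ℝ → ℝ := fun y ↦ exp (μ + σ * y) + exp (ν + τ * y)
  have hf : StrictMono f := strictMono_exp_affine_add_exp_affine hσ hτ
  have hx : xa ≤ xb := (hf.lt_iff_lt.mp (by rwa [hxa, hxb] at hab)).le
  have hset : {y | a ≤ f y ∧ f y < b} = Ico xa xb := by
    rw [hxa, hxb]
    exact (OrderEmbedding.ofStrictMono f hf).preimage_Ico xa xb
  rw [hset, integral_add (integrableOn_Ico_exp_affine ..) (integrableOn_Ico_exp_affine ..),
    setIntegral_Ico_exp_gaussianReal hx, setIntegral_Ico_exp_gaussianReal hx]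

/-- For `ξ` standard normal, `0 < a < b`, and `xa`, `xb` the unique solutions of
`a = exp(μ + σ·x) + exp(ν + τ·x)` and `b = exp(μ + σ·x) + exp(ν + τ·x)` respectively:
`E[(exp(μ + σ·ξ) + exp(ν + τ·ξ))·1{a ≤ exp(μ + σ·ξ) + exp(ν + τ·ξ) < b}]
  = exp(μ + σ²/2)·(Φ(xb - σ) - Φ(xa - σ)) + exp(ν + τ²/2)·(Φ(xb - τ) - Φ(xa - τ))`. -/
theorem truncated_mean_sum_lognormal (μ ν σ τ a b xa xb : ℝ) (hσ : 0 < σ) (hτ : 0 < τ)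
    (ha : 0 < a) (hab : a < b)
    (hxa : a = Real.exp (μ + σ * xa) + Real.exp (ν + τ * xa))
    (hxb : b = Real.exp (μ + σ * xb) + Real.exp (ν + τ * xb)) :
    ∫ x in {y : ℝ | a ≤ Real.exp (μ + σ * y) + Real.exp (ν + τ * y) ∧
          Real.exp (μ + σ * y) + Real.exp (ν + τ * y) < b},
        (Real.exp (μ + σ * x) + Real.exp (ν + τ * x)) ∂(gaussianReal 0 1)
      = Real.exp (μ + σ ^ 2 / 2) * (stdNormalCDF (xb - σ) - stdNormalCDF (xa - σ))
        + Real.exp (ν + τ ^ 2 / 2) * (stdNormalCDF (xb - τ) - stdNormalCDF (xa - τ)) :=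
  truncated_mean_sum_lognormal_general μ ν σ τ a b xa xb hσ hτ hab hxa hxb
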